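/- arXiv:1607.03752 — 4 statements merged into one kernel-verified Lean document; each statement's English description precedes it below -/
import Mathlib

section
/- Let H be a real Hilbert space, Y an H-valued random element, and τ ∈ H with ‖τ‖ < 1. Suppose there exists an integer m > √2/(√2 − √(1+‖τ‖)) and M > 0 with P(‖Y‖ > M/m) < 1/m. Then for every Q with ‖Q‖ > M, g(Q) = E[‖Q−Y‖ − ‖Y‖] − ⟨τ, Q⟩ > g(0) = 0. In particular, any minimizer Q of g satisfies ‖Q‖ ≤ M. -/
open MeasureTheory
open scoped RealInnerProductSpace

/-! Put `c = M / m` and `p = P(‖Y‖ > c)`. Since `‖Q - Y‖ - ‖Y‖` is at least `‖Q‖ - 2c` on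
`{‖Y‖ ≤ c}` and at least `-‖Q‖` everywhere, `g(Q) ≥ (1 - p)(‖Q‖ - 2c) - p‖Q‖ - ‖τ‖‖Q‖`.
The condition on `m` amounts to `m²(1 + ‖τ‖) < 2(m - 1)²`, which together with `p < 1/m`
and `‖Q‖ > mc` makes this lower bound positive. -/

lemma one_lt_and_sq_mul_one_add_lt_of_sqrt_two_div_lt {m t : ℝ} (ht0 : 0 ≤ t) (ht1 : t < 1)
    (hm : √2 / (√2 - √(1 + t)) < m) : 1 < m ∧ m ^ 2 * (1 + t) < 2 * (m - 1) ^ 2 := by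
  have hsqrt : √(1 + t) < √2 := Real.sqrt_lt_sqrt (by linarith) (by linarith)
  have hm' : √2 < m * (√2 - √(1 + t)) := (div_lt_iff₀ (by linarith)).1 hm
  have hm0 : 0 < m := by
    by_contra! h
    nlinarith [Real.sqrt_pos.2 (zero_lt_two : (0 : ℝ) < 2)]
  have hlin : m * √(1 + t) < √2 * (m - 1) := by linarith
  have hm1 : 1 < m := by
    by_contra! h
    nlinarith [Real.sqrt_nonneg (1 + t), Real.sqrt_nonneg 2]
  refine ⟨hm1, ?_⟩
  calc m ^ 2 * (1 + t) = (m * √(1 + t)) ^ 2 := by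
        rw [mul_pow, Real.sq_sqrt (by linarith)]
    _ < (√2 * (m - 1)) ^ 2 :=
        pow_lt_pow_left₀ hlin (mul_nonneg hm0.le (Real.sqrt_nonneg _)) two_ne_zero
    _ = 2 * (m - 1) ^ 2 := by rw [mul_pow, Real.sq_sqrt zero_le_two]

lemma spatial_quantile_lower_bound_pos {m t p c N : ℝ} (hm1 : 1 < m)
    (hkey : m ^ 2 * (1 + t) < 2 * (m - 1) ^ 2)
    (hp0 : 0 ≤ p) (hp : p < 1 / m) (hN0 : 0 ≤ N) (hN : m * c < N) :
    0 < (1 - p) * (N - 2 * c) - p * N - t * N := by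
  have hm0 : 0 < m := by linarith
  have hpm : p * m < 1 := (lt_div_iff₀ hm0).1 hp
  have hslack : 2 * (1 - p) < m * (1 - 2 * p - t) := by nlinarith
  have ha : 0 < 1 - 2 * p - t := by nlinarith
  rcases le_or_gt 0 c with hc | hc
  · nlinarith [mul_lt_mul_of_pos_left hN ha]
  · have hp1 : p < 1 := by nlinarith
    nlinarith [mul_nonneg ha.le hN0, mul_pos (neg_pos.2 hc) (sub_pos.2 hp1)]

section

variable {Ω H : Type*} [MeasurableSpace Ω] [NormedAddCommGroup H]

lemma integrable_norm_sub_sub_norm {μ : Measure Ω} [IsFiniteMeasure μ] {Y : Ω → H}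
    (hY : AEStronglyMeasurable Y μ) (Q : H) : Integrable (fun ω ↦ ‖Q - Y ω‖ - ‖Y ω‖) μ := by
  refine .of_bound ((aestronglyMeasurable_const.sub hY).norm.sub hY.norm) ‖Q‖
    (ae_of_all _ fun ω ↦ ?_)
  simpa [Real.norm_eq_abs] using abs_norm_sub_norm_le (Q - Y ω) (-Y ω)

lemma integral_norm_sub_sub_norm_ge {μ : Measure Ω} [IsProbabilityMeasure μ] {Y : Ω → H}
    (hY : AEStronglyMeasurable Y μ) (Q : H) (c : ℝ) :
    (1 - μ.real {ω | c < ‖Y ω‖}) * (‖Q‖ - 2 * c) - μ.real {ω | c < ‖Y ω‖} * ‖Q‖ ≤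
      ∫ ω, (‖Q - Y ω‖ - ‖Y ω‖) ∂μ := by
  set S := {ω | c < ‖Y ω‖}
  have hS : NullMeasurableSet S μ := nullMeasurableSet_lt aemeasurable_const hY.norm.aemeasurable
  have hbound : ∀ ω, ‖Q‖ - 2 * c - S.indicator (fun _ ↦ 2 * ‖Q‖ - 2 * c) ω ≤
      ‖Q - Y ω‖ - ‖Y ω‖ := by
    intro ω
    by_cases hω : ω ∈ S
    · rw [Set.indicator_of_mem hω]
      linarith [norm_sub_norm_le (Y ω) Q, norm_sub_rev Q (Y ω)]
    · rw [Set.indicator_of_notMem hω]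
      have : ‖Y ω‖ ≤ c := not_lt.1 hω
      linarith [norm_sub_norm_le Q (Y ω)]
  have hint : Integrable (S.indicator fun _ ↦ 2 * ‖Q‖ - 2 * c) μ :=
    (integrable_const _).indicator₀ hS
  calc (1 - μ.real S) * (‖Q‖ - 2 * c) - μ.real S * ‖Q‖
      = ∫ ω, (‖Q‖ - 2 * c - S.indicator (fun _ ↦ 2 * ‖Q‖ - 2 * c) ω) ∂μ := by
        rw [integral_sub (integrable_const _) hint, integral_indicator₀ hS, setIntegral_const,
          integral_const]
        simp only [probReal_univ, smul_eq_mul]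
        ring
    _ ≤ ∫ ω, (‖Q - Y ω‖ - ‖Y ω‖) ∂μ :=
        integral_mono ((integrable_const _).sub hint) (integrable_norm_sub_sub_norm hY Q) hbound

end

theorem spatial_quantile_minimizer_bounded_general
    {H : Type*} [NormedAddCommGroup H] [InnerProductSpace ℝ H]
    {Ω : Type*} [MeasurableSpace Ω] (μ : Measure Ω) [IsProbabilityMeasure μ]
    (Y : Ω → H) (hY : AEStronglyMeasurable Y μ) (τ : H) (hτ : ‖τ‖ < 1)
    (m : ℕ) (M : ℝ)
    (hm : (m : ℝ) > Real.sqrt 2 / (Real.sqrt 2 - Real.sqrt (1 + ‖τ‖)))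
    (hP : (μ {ω | ‖Y ω‖ > M / m}).toReal < 1 / m) :
    ((∫ ω, (‖(0 : H) - Y ω‖ - ‖Y ω‖) ∂μ) - ⟪τ, (0 : H)⟫ = 0) ∧
    (∀ Q : H, ‖Q‖ > M →
        (∫ ω, (‖Q - Y ω‖ - ‖Y ω‖) ∂μ) - ⟪τ, Q⟫ > 0) ∧
    (∀ Q : H,
        IsMinOn (fun Q : H => (∫ ω, (‖Q - Y ω‖ - ‖Y ω‖) ∂μ) - ⟪τ, Q⟫) Set.univ Q →
        ‖Q‖ ≤ M) := by
  obtain ⟨hm1, hkey⟩ := one_lt_and_sq_mul_one_add_lt_of_sqrt_two_div_lt (norm_nonneg τ) hτ hm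
  have hzero : (∫ ω, (‖(0 : H) - Y ω‖ - ‖Y ω‖) ∂μ) - ⟪τ, (0 : H)⟫ = 0 := by simp
  have hpos : ∀ Q : H, ‖Q‖ > M → (∫ ω, (‖Q - Y ω‖ - ‖Y ω‖) ∂μ) - ⟪τ, Q⟫ > 0 := by
    intro Q hQ
    have hQ' : (m : ℝ) * (M / m) < ‖Q‖ := by rwa [mul_div_cancel₀ _ (zero_lt_one.trans hm1).ne']
    have hmargin :=
      spatial_quantile_lower_bound_pos hm1 hkey measureReal_nonneg hP (norm_nonneg Q) hQ'
    linarith [integral_norm_sub_sub_norm_ge hY Q (M / m), real_inner_le_norm τ Q]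
  refine ⟨hzero, hpos, fun Q hQ ↦ not_lt.1 fun hlt ↦ ?_⟩
  have hmin := isMinOn_iff.1 hQ 0 (Set.mem_univ 0)
  linarith [hpos Q hlt]

/-- If `m > √2/(√2 − √(1+‖τ‖))` and `P(‖Y‖ > M/m) < 1/m`, then `g(Q) > g(0) = 0`
whenever `‖Q‖ > M`; in particular any minimizer of g has norm at most M. -/
theorem spatial_quantile_minimizer_bounded
    {H : Type*} [NormedAddCommGroup H] [InnerProductSpace ℝ H] [CompleteSpace H]
    [SecondCountableTopology H]
    {Ω : Type*} [MeasurableSpace Ω] (μ : Measure Ω) [IsProbabilityMeasure μ]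
    (Y : Ω → H) (hY : AEStronglyMeasurable Y μ) (τ : H) (hτ : ‖τ‖ < 1)
    (m : ℕ) (M : ℝ) (hM : 0 < M)
    (hm : (m : ℝ) > Real.sqrt 2 / (Real.sqrt 2 - Real.sqrt (1 + ‖τ‖)))
    (hP : (μ {ω | ‖Y ω‖ > M / m}).toReal < 1 / m) :
    ((∫ ω, (‖(0 : H) - Y ω‖ - ‖Y ω‖) ∂μ) - ⟪τ, (0 : H)⟫ = 0) ∧
    (∀ Q : H, ‖Q‖ > M →
        (∫ ω, (‖Q - Y ω‖ - ‖Y ω‖) ∂μ) - ⟪τ, Q⟫ > 0) ∧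
    (∀ Q : H,
        IsMinOn (fun Q : H => (∫ ω, (‖Q - Y ω‖ - ‖Y ω‖) ∂μ) - ⟪τ, Q⟫) Set.univ Q →
        ‖Q‖ ≤ M) :=
  spatial_quantile_minimizer_bounded_general μ Y hY τ hτ m M hm hP
end

section
/- Let H be a real Hilbert space and Q1, Q2, Y, h ∈ H with Q1 ≠ Y and Q2 ≠ Y. Let W(Q)(h) = h/‖Q−Y‖ − ⟨h, Q−Y⟩(Q−Y)/‖Q−Y‖³. Then ‖W(Q1)(h) − W(Q2)(h)‖ ≤ 6‖h‖‖Q1 − Q2‖/(‖Q1−Y‖‖Q2−Y‖). -/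
open scoped RealInnerProductSpace

lemma unit_vec_lipschitz {H : Type*} [NormedAddCommGroup H] [InnerProductSpace ℝ H]
    (a b : H) (ha : a ≠ 0) (hb : b ≠ 0) :
    ‖‖a‖⁻¹ • a - ‖b‖⁻¹ • b‖ ≤ 2 * ‖a - b‖ / ‖b‖ := by
  have hna : (0:ℝ) < ‖a‖ := norm_pos_iff.mpr ha
  have hnb : (0:ℝ) < ‖b‖ := norm_pos_iff.mpr hb
  have key : ‖a‖⁻¹ • a - ‖b‖⁻¹ • b = ‖b‖⁻¹ • (a - b) + (‖a‖⁻¹ - ‖b‖⁻¹) • a := by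
    rw [smul_sub, sub_smul]; abel
  rw [key]
  have h1 : ‖‖b‖⁻¹ • (a - b)‖ = ‖a - b‖ / ‖b‖ := by
    rw [norm_smul, norm_inv, norm_norm]; ring
  have h2 : ‖(‖a‖⁻¹ - ‖b‖⁻¹) • a‖ ≤ ‖a - b‖ / ‖b‖ := by
    rw [norm_smul, Real.norm_eq_abs,
      show ‖a‖⁻¹ - ‖b‖⁻¹ = (‖b‖ - ‖a‖) / (‖a‖ * ‖b‖) by field_simp,
      abs_div, abs_of_pos (by positivity : (0:ℝ) < ‖a‖ * ‖b‖)]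
    have hle : |‖b‖ - ‖a‖| ≤ ‖a - b‖ := by
      rw [abs_sub_comm]
      simpa using abs_norm_sub_norm_le a b
    rw [div_mul_eq_mul_div, div_le_div_iff₀ (by positivity) hnb]
    nlinarith [mul_le_mul_of_nonneg_right (mul_le_mul_of_nonneg_right hle hna.le) hnb.le]
  calc ‖‖b‖⁻¹ • (a - b) + (‖a‖⁻¹ - ‖b‖⁻¹) • a‖
      ≤ ‖‖b‖⁻¹ • (a - b)‖ + ‖(‖a‖⁻¹ - ‖b‖⁻¹) • a‖ := norm_add_le _ _
    _ ≤ ‖a - b‖ / ‖b‖ + ‖a - b‖ / ‖b‖ := by rw [h1]; linarith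
    _ = 2 * ‖a - b‖ / ‖b‖ := by ring

/-- Lipschitz-type bound for the Hessian `W(Q)(h) = h/‖Q−Y‖ − ⟨h, Q−Y⟩(Q−Y)/‖Q−Y‖³`
of `Q ↦ ‖Q − Y‖`:
`‖W(Q₁)(h) − W(Q₂)(h)‖ ≤ 6‖h‖‖Q₁ − Q₂‖/(‖Q₁−Y‖‖Q₂−Y‖)`. -/
theorem hessian_lipschitz_bound
    {H : Type*} [NormedAddCommGroup H] [InnerProductSpace ℝ H] [CompleteSpace H]
    (Q₁ Q₂ Y h : H) (h1 : Q₁ ≠ Y) (h2 : Q₂ ≠ Y) :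
    ‖(‖Q₁ - Y‖⁻¹ • h - (⟪h, Q₁ - Y⟫ / ‖Q₁ - Y‖ ^ 3) • (Q₁ - Y)) -
        (‖Q₂ - Y‖⁻¹ • h - (⟪h, Q₂ - Y⟫ / ‖Q₂ - Y‖ ^ 3) • (Q₂ - Y))‖ ≤
      6 * ‖h‖ * ‖Q₁ - Q₂‖ / (‖Q₁ - Y‖ * ‖Q₂ - Y‖) := by
  set a := Q₁ - Y with ha_def
  set b := Q₂ - Y with hb_def
  have ha : a ≠ 0 := sub_ne_zero.mpr h1
  have hb : b ≠ 0 := sub_ne_zero.mpr h2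
  have hna : (0:ℝ) < ‖a‖ := norm_pos_iff.mpr ha
  have hnb : (0:ℝ) < ‖b‖ := norm_pos_iff.mpr hb
  have hab : Q₁ - Q₂ = a - b := by rw [ha_def, hb_def]; abel
  set u : H := ‖a‖⁻¹ • a with hu_def
  set v : H := ‖b‖⁻¹ • b with hv_def
  have hnu : ‖u‖ = 1 := norm_smul_inv_norm ha
  have hnv : ‖v‖ = 1 := norm_smul_inv_norm hb
  -- decomposition
  have key : (‖a‖⁻¹ • h - (⟪h, a⟫ / ‖a‖ ^ 3) • a) - (‖b‖⁻¹ • h - (⟪h, b⟫ / ‖b‖ ^ 3) • b)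
      = (‖a‖⁻¹ - ‖b‖⁻¹) • h -
        (⟪h, u⟫ • (‖a‖⁻¹ • u - ‖b‖⁻¹ • v) + (⟪h, u⟫ - ⟪h, v⟫) • (‖b‖⁻¹ • v)) := by
    rw [hu_def, hv_def]
    simp only [real_inner_smul_right]
    match_scalars <;> (field_simp; try ring) <;> tauto
  rw [key]
  -- bound pieces
  have habd := abs_norm_sub_norm_le a b
  have hinv : |‖a‖⁻¹ - ‖b‖⁻¹| ≤ ‖a - b‖ / (‖a‖ * ‖b‖) := by
    rw [show ‖a‖⁻¹ - ‖b‖⁻¹ = (‖b‖ - ‖a‖) / (‖a‖ * ‖b‖) by field_simp,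
      abs_div, abs_of_pos (by positivity : (0:ℝ) < ‖a‖ * ‖b‖)]
    apply div_le_div_of_nonneg_right _ (by positivity)
    rw [abs_sub_comm]; simpa using habd
  have T1 : ‖(‖a‖⁻¹ - ‖b‖⁻¹) • h‖ ≤ ‖a - b‖ / (‖a‖ * ‖b‖) * ‖h‖ := by
    rw [norm_smul, Real.norm_eq_abs]
    exact mul_le_mul_of_nonneg_right hinv (norm_nonneg h)
  have huv1 : ‖u - v‖ ≤ 2 * ‖a - b‖ / ‖b‖ := unit_vec_lipschitz a b ha hb
  have huv2 : ‖u - v‖ ≤ 2 * ‖a - b‖ / ‖a‖ := by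
    rw [← norm_neg, neg_sub, ← norm_neg (a - b), neg_sub]
    exact unit_vec_lipschitz b a hb ha
  have T2 : ‖‖a‖⁻¹ • u - ‖b‖⁻¹ • v‖ ≤ 3 * ‖a - b‖ / (‖a‖ * ‖b‖) := by
    have hd : ‖a‖⁻¹ • u - ‖b‖⁻¹ • v = ‖a‖⁻¹ • (u - v) + (‖a‖⁻¹ - ‖b‖⁻¹) • v := by
      rw [smul_sub, sub_smul]; abel
    rw [hd]
    calc ‖‖a‖⁻¹ • (u - v) + (‖a‖⁻¹ - ‖b‖⁻¹) • v‖
        ≤ ‖‖a‖⁻¹ • (u - v)‖ + ‖(‖a‖⁻¹ - ‖b‖⁻¹) • v‖ := norm_add_le _ _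
      _ ≤ ‖a‖⁻¹ * (2 * ‖a - b‖ / ‖b‖) + ‖a - b‖ / (‖a‖ * ‖b‖) := by
          gcongr
          · rw [norm_smul, Real.norm_eq_abs, abs_of_pos (by positivity)]
            exact mul_le_mul_of_nonneg_left huv1 (by positivity)
          · rw [norm_smul, Real.norm_eq_abs, hnv, mul_one]
            exact hinv
      _ = 3 * ‖a - b‖ / (‖a‖ * ‖b‖) := by field_simp; ring
  have T3 : |⟪h, u⟫ - ⟪h, v⟫| ≤ ‖h‖ * (2 * ‖a - b‖ / ‖a‖) := by
    rw [← inner_sub_right]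
    calc |⟪h, u - v⟫| ≤ ‖h‖ * ‖u - v‖ := abs_real_inner_le_norm h (u - v)
      _ ≤ ‖h‖ * (2 * ‖a - b‖ / ‖a‖) := mul_le_mul_of_nonneg_left huv2 (norm_nonneg h)
  have T4 : ‖‖b‖⁻¹ • v‖ = ‖b‖⁻¹ := by
    rw [norm_smul, Real.norm_eq_abs, abs_of_pos (by positivity), hnv, mul_one]
  have hhu : |⟪h, u⟫| ≤ ‖h‖ := by
    calc |⟪h, u⟫| ≤ ‖h‖ * ‖u‖ := abs_real_inner_le_norm h u
      _ = ‖h‖ := by rw [hnu, mul_one]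
  have main : ‖(‖a‖⁻¹ - ‖b‖⁻¹) • h -
        (⟪h, u⟫ • (‖a‖⁻¹ • u - ‖b‖⁻¹ • v) + (⟪h, u⟫ - ⟪h, v⟫) • (‖b‖⁻¹ • v))‖
      ≤ ‖a - b‖ / (‖a‖ * ‖b‖) * ‖h‖ + (‖h‖ * (3 * ‖a - b‖ / (‖a‖ * ‖b‖))
          + ‖h‖ * (2 * ‖a - b‖ / ‖a‖) * ‖b‖⁻¹) := by
    refine (norm_sub_le _ _).trans ?_
    gcongr
    refine (norm_add_le _ _).trans ?_
    gcongr
    · calc ‖⟪h, u⟫ • (‖a‖⁻¹ • u - ‖b‖⁻¹ • v)‖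
          = |⟪h, u⟫| * ‖‖a‖⁻¹ • u - ‖b‖⁻¹ • v‖ := by rw [norm_smul, Real.norm_eq_abs]
        _ ≤ ‖h‖ * (3 * ‖a - b‖ / (‖a‖ * ‖b‖)) := by
            apply mul_le_mul hhu T2 (norm_nonneg _) (norm_nonneg h)
    · calc ‖(⟪h, u⟫ - ⟪h, v⟫) • (‖b‖⁻¹ • v)‖
          = |⟪h, u⟫ - ⟪h, v⟫| * ‖‖b‖⁻¹ • v‖ := by rw [norm_smul, Real.norm_eq_abs]
        _ ≤ ‖h‖ * (2 * ‖a - b‖ / ‖a‖) * ‖b‖⁻¹ := by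
            rw [T4]
            exact mul_le_mul_of_nonneg_right T3 (by positivity)
  refine main.trans ?_
  rw [hab]
  apply le_of_eq
  field_simp
  ring
end

section
/- Let H be a finite-dimensional real inner product space, let Y1, …, Yn ∈ H with weights w1, …, wn > 0, and τ ∈ H with ‖τ‖ < 1. Define ĝ(Q) = Σᵢ wᵢ(‖Q − Yᵢ‖ − ⟨τ, Q⟩). If Q* minimizes ĝ and the set I = {i : Yᵢ = Q*} is nonempty, then ‖Σ_{i∉I} wᵢ[(Q* − Yᵢ)/‖Q* − Yᵢ‖ − τ]‖ ≤ (1 + ‖τ‖) Σ_{i∈I} wᵢ. -/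
/-!
Split the objective at `Qs` as `φ Q + W * ‖Q - Qs‖`, where `W` is the total weight of the data
points at `Qs` and `φ` (the remaining distances and the linear term) is differentiable at `Qs`.
Moving from the minimizer `Qs` along a ray `t • v`, `t ≥ 0`, shows `-W‖v‖ ≤ φ' v`, so
`‖∇φ(Qs)‖ ≤ W`. The vector to be bounded is `∇φ(Qs) + W • τ`.
-/

open scoped RealInnerProductSpace Classical

theorem hasFDerivAt_norm_of_ne_zero {F : Type*} [NormedAddCommGroup F] [InnerProductSpace ℝ F]
    {x : F} (hx : x ≠ 0) : HasFDerivAt (‖·‖) (‖x‖⁻¹ • innerSL ℝ x) x := by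
  have h := (hasStrictFDerivAt_norm_sq x).hasFDerivAt.sqrt (by positivity)
  simp only [Real.sqrt_sq (norm_nonneg _)] at h
  convert h using 1
  rw [← Nat.cast_smul_eq_nsmul ℝ, smul_smul]
  congr 1
  have hx0 : ‖x‖ ≠ 0 := norm_ne_zero_iff.mpr hx
  push_cast
  field_simp

theorem neg_mul_norm_le_of_isMinOn_add_mul_norm_sub {E : Type*} [NormedAddCommGroup E]
    [NormedSpace ℝ E] {φ : E → ℝ} {φ' : E →L[ℝ] ℝ} {x : E} {c : ℝ}
    (hφ : HasFDerivAt φ φ' x) (hmin : IsMinOn (fun y => φ y + c * ‖y - x‖) Set.univ x) (v : E) :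
    -(c * ‖v‖) ≤ φ' v := by
  have hray : IsMinOn (fun t : ℝ => φ (x + t • v) + c * ‖v‖ * t) (Set.Ici 0) 0 := by
    intro t (ht : 0 ≤ t)
    simpa [norm_smul, abs_of_nonneg ht, mul_comm, mul_left_comm] using
      hmin (Set.mem_univ (x + t • v))
  have hderiv : HasDerivAt (fun t : ℝ => φ (x + t • v) + c * ‖v‖ * t) (φ' v + c * ‖v‖) 0 := by
    have hline : HasDerivAt (fun t : ℝ => x + t • v) v 0 :=
      ((hasDerivAt_id 0).smul_const v).const_add x |>.congr_deriv (one_smul ℝ v)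
    simpa using (hφ.comp_hasDerivAt_of_eq 0 hline (by simp)).fun_add
      ((hasDerivAt_id 0).const_mul (c * ‖v‖))
  have hdir : (1 : ℝ) ∈ posTangentConeAt (Set.Ici 0) 0 :=
    mem_posTangentConeAt_of_segment_subset (by simp [segment_eq_Icc, Set.Icc_subset_Ici_self])
  have hslope : 0 ≤ φ' v + c * ‖v‖ := by
    simpa using hray.localize.hasFDerivWithinAt_nonneg hderiv.hasFDerivAt.hasFDerivWithinAt hdir
  linarith

theorem norm_le_of_isMinOn_add_mul_norm_sub {E : Type*} [NormedAddCommGroup E]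
    [NormedSpace ℝ E] {φ : E → ℝ} {φ' : E →L[ℝ] ℝ} {x : E} {c : ℝ} (hc : 0 ≤ c)
    (hφ : HasFDerivAt φ φ' x) (hmin : IsMinOn (fun y => φ y + c * ‖y - x‖) Set.univ x) :
    ‖φ'‖ ≤ c := by
  refine φ'.opNorm_le_bound hc fun v => abs_le.2 ⟨?_, ?_⟩
  · exact neg_mul_norm_le_of_isMinOn_add_mul_norm_sub hφ hmin v
  · simpa using neg_mul_norm_le_of_isMinOn_add_mul_norm_sub hφ hmin (-v)

theorem hasFDerivAt_sum_mul_norm_sub {F ι : Type*} [NormedAddCommGroup F] [InnerProductSpace ℝ F]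
    (s : Finset ι) (w : ι → ℝ) (Y : ι → F) {x : F} (hx : ∀ i ∈ s, Y i ≠ x) :
    HasFDerivAt (fun y => ∑ i ∈ s, w i * ‖y - Y i‖)
      (innerSL ℝ (∑ i ∈ s, w i • ‖x - Y i‖⁻¹ • (x - Y i))) x := by
  simp only [map_sum, map_smul]
  refine HasFDerivAt.fun_sum fun i hi => HasFDerivAt.const_mul ?_ (w i)
  have := hasFDerivAt_norm_of_ne_zero (sub_ne_zero.2 (hx i hi).symm)
  simpa [Function.comp_def] using this.comp x ((hasFDerivAt_id x).sub_const (Y i))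

section QuantileObjective

variable {H ι : Type*} [NormedAddCommGroup H] [InnerProductSpace ℝ H] [Fintype ι]
  (Y : ι → H) (w : ι → ℝ) (τ x : H)

theorem sum_mul_norm_sub_sub_inner_eq (Q : H) :
    ∑ i, w i * (‖Q - Y i‖ - ⟪τ, Q⟫) =
      (∑ i ∈ Finset.univ.filter (fun i => Y i ≠ x), w i * ‖Q - Y i‖ - ⟪(∑ i, w i) • τ, Q⟫) +
        (∑ i ∈ Finset.univ.filter (fun i => Y i = x), w i) * ‖Q - x‖ := by
  have hA : ∑ i ∈ Finset.univ.filter (fun i => Y i = x), w i * ‖Q - Y i‖ =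
      (∑ i ∈ Finset.univ.filter (fun i => Y i = x), w i) * ‖Q - x‖ := by
    rw [Finset.sum_mul]
    exact Finset.sum_congr rfl fun i hi => by rw [(Finset.mem_filter.1 hi).2]
  simp only [mul_sub, Finset.sum_sub_distrib, ← Finset.sum_mul, real_inner_smul_left]
  rw [← Finset.sum_filter_add_sum_filter_not Finset.univ (fun i => Y i = x), hA]
  ring

theorem sum_filter_ne_smul_sub_eq (u : ι → H) :
    ∑ i ∈ Finset.univ.filter (fun i => Y i ≠ x), w i • (u i - τ) =
      (∑ i ∈ Finset.univ.filter (fun i => Y i ≠ x), w i • u i - (∑ i, w i) • τ) +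
        (∑ i ∈ Finset.univ.filter (fun i => Y i = x), w i) • τ := by
  rw [← Finset.sum_filter_add_sum_filter_not Finset.univ (fun i => Y i = x) w]
  simp only [smul_sub, Finset.sum_sub_distrib, ← Finset.sum_smul, add_smul]
  abel

end QuantileObjective

theorem sample_quantile_atom_condition_general
    {H : Type*} [NormedAddCommGroup H] [InnerProductSpace ℝ H]
    {n : ℕ} (Y : Fin n → H) (w : Fin n → ℝ) (hw : ∀ i, 0 < w i)
    (τ : H) (Qs : H)
    (hmin : IsMinOn (fun Q : H => ∑ i, w i * (‖Q - Y i‖ - ⟪τ, Q⟫)) Set.univ Qs) :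
    ‖∑ i ∈ Finset.univ.filter (fun i => Y i ≠ Qs),
        w i • (‖Qs - Y i‖⁻¹ • (Qs - Y i) - τ)‖ ≤
      (1 + ‖τ‖) * ∑ i ∈ Finset.univ.filter (fun i => Y i = Qs), w i := by
  set W := ∑ i ∈ Finset.univ.filter (fun i => Y i = Qs), w i
  have hW : 0 ≤ W := Finset.sum_nonneg fun i _ => (hw i).le
  have hφ := (hasFDerivAt_sum_mul_norm_sub (Finset.univ.filter (fun i => Y i ≠ Qs)) w Y
    fun i hi => (Finset.mem_filter.1 hi).2).fun_sub (innerSL ℝ ((∑ i, w i) • τ)).hasFDerivAt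
  rw [← map_sub] at hφ
  have hgrad := norm_le_of_isMinOn_add_mul_norm_sub hW hφ
    (by simpa only [sum_mul_norm_sub_sub_inner_eq Y w τ Qs, innerSL_apply_apply] using hmin)
  rw [innerSL_apply_norm] at hgrad
  rw [sum_filter_ne_smul_sub_eq Y w τ Qs]
  calc _ ≤ _ + W * ‖τ‖ := (norm_add_le _ _).trans_eq (by rw [norm_smul, Real.norm_of_nonneg hW])
    _ ≤ (1 + ‖τ‖) * W := by nlinarith [norm_nonneg τ]

/-- First-order condition at a minimizer of the weighted spatial-quantile
objective when the minimizer coincides with some data points: the norm of the sum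
of unit-vector residuals over the other points is bounded by
`(1 + ‖τ‖)` times the total weight of the coinciding points. -/
theorem sample_quantile_atom_condition
    {H : Type*} [NormedAddCommGroup H] [InnerProductSpace ℝ H]
    [FiniteDimensional ℝ H]
    {n : ℕ} (Y : Fin n → H) (w : Fin n → ℝ) (hw : ∀ i, 0 < w i)
    (τ : H) (hτ : ‖τ‖ < 1) (Qs : H)
    (hmin : IsMinOn (fun Q : H => ∑ i, w i * (‖Q - Y i‖ - ⟪τ, Q⟫)) Set.univ Qs)
    (hI : ∃ i, Y i = Qs) :
    ‖∑ i ∈ Finset.univ.filter (fun i => Y i ≠ Qs),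
        w i • (‖Qs - Y i‖⁻¹ • (Qs - Y i) - τ)‖ ≤
      (1 + ‖τ‖) * ∑ i ∈ Finset.univ.filter (fun i => Y i = Qs), w i :=
  sample_quantile_atom_condition_general Y w hw τ Qs hmin
end

section
/- Let H be a real Hilbert space, Y1, …, Yn ∈ H not all lying on one line, w1, …, wn > 0, and Q ∈ H distinct from all Yᵢ. Then the operator A(h) = Σᵢ wᵢ[h/‖Q − Yᵢ‖ − ⟨h, Q − Yᵢ⟩(Q − Yᵢ)/‖Q − Yᵢ‖³] is positive semidefinite, i.e., ⟨A(h), h⟩ ≥ 0 for all h ∈ H, with ⟨A(h), h⟩ = Σᵢ wᵢ ‖P_h(Q − Yᵢ)‖²/‖Q − Yᵢ‖³ when ‖h‖ = 1, where P_h is projection onto the orthogonal complement of h. -/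
open scoped RealInnerProductSpace

/-!
Each summand contributes `wᵢ (‖h‖²‖vᵢ‖² - ⟪h, vᵢ⟫²) / ‖vᵢ‖³` with `vᵢ = Q - Yᵢ` to the quadratic
form, which is nonnegative by Cauchy–Schwarz; for a unit vector `h` the numerator is
`‖vᵢ‖² - ⟪vᵢ, h⟫² = ‖P_h vᵢ‖²` by Pythagoras.
-/

section

variable {H : Type*} [NormedAddCommGroup H] [InnerProductSpace ℝ H]

/-- The Hessian at `Q` of `x ↦ ‖x - Y‖`, for `v = Q - Y`, applied to `h`. -/
noncomputable def distHessian (v h : H) : H :=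
  ‖v‖⁻¹ • h - (⟪h, v⟫ / ‖v‖ ^ 3) • v

-- Both sides vanish at `x = 0`, as `0⁻¹ = 0` in `ℝ`.
lemma div_sub_div_pow_three (a b x : ℝ) : a / x - b / x ^ 3 = (a * x ^ 2 - b) / x ^ 3 := by
  rcases eq_or_ne x 0 with rfl | hx
  · simp
  · field_simp

lemma inner_distHessian_self (v h : H) :
    ⟪distHessian v h, h⟫ = (‖h‖ ^ 2 * ‖v‖ ^ 2 - ⟪h, v⟫ ^ 2) / ‖v‖ ^ 3 := by
  rw [distHessian, inner_sub_left, real_inner_smul_left, real_inner_smul_left,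
    real_inner_self_eq_norm_sq, real_inner_comm v h, ← div_sub_div_pow_three]
  ring

lemma inner_distHessian_self_nonneg (v h : H) : 0 ≤ ⟪distHessian v h, h⟫ := by
  rw [inner_distHessian_self]
  have hcs : ⟪h, v⟫ ^ 2 ≤ ‖h‖ ^ 2 * ‖v‖ ^ 2 := by
    rw [sq, sq, sq, ← real_inner_self_eq_norm_mul_norm, ← real_inner_self_eq_norm_mul_norm]
    exact real_inner_mul_inner_self_le h v
  have := norm_nonneg v
  exact div_nonneg (by linarith) (by positivity)

lemma norm_sub_inner_smul_sq {h : H} (hh : ‖h‖ = 1) (v : H) :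
    ‖v - ⟪v, h⟫ • h‖ ^ 2 = ‖v‖ ^ 2 - ⟪h, v⟫ ^ 2 := by
  rw [norm_sub_sq_real, norm_smul, real_inner_smul_right, real_inner_comm h v, hh,
    Real.norm_eq_abs, mul_one, sq_abs]
  ring

lemma inner_distHessian_self_of_norm_eq_one {h : H} (hh : ‖h‖ = 1) (v : H) :
    ⟪distHessian v h, h⟫ = ‖v - ⟪v, h⟫ • h‖ ^ 2 / ‖v‖ ^ 3 := by
  rw [inner_distHessian_self, norm_sub_inner_smul_sq hh, hh, one_pow, one_mul]

end

theorem newton_hessian_posdef_general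
    {H : Type*} [NormedAddCommGroup H] [InnerProductSpace ℝ H]
    {n : ℕ} (Y : Fin n → H) (w : Fin n → ℝ) (hw : ∀ i, 0 < w i) (Q : H) :
    (∀ h : H,
        0 ≤ ⟪∑ i, w i • (‖Q - Y i‖⁻¹ • h -
              (⟪h, Q - Y i⟫ / ‖Q - Y i‖ ^ 3) • (Q - Y i)), h⟫) ∧
    (∀ h : H, ‖h‖ = 1 →
        ⟪∑ i, w i • (‖Q - Y i‖⁻¹ • h -
              (⟪h, Q - Y i⟫ / ‖Q - Y i‖ ^ 3) • (Q - Y i)), h⟫ =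
          ∑ i, w i * ‖(Q - Y i) - ⟪Q - Y i, h⟫ • h‖ ^ 2 / ‖Q - Y i‖ ^ 3) := by
  have quadratic_form (h : H) :
      ⟪∑ i, w i • distHessian (Q - Y i) h, h⟫ = ∑ i, w i * ⟪distHessian (Q - Y i) h, h⟫ := by
    simp only [sum_inner, real_inner_smul_left]
  refine ⟨fun h => ?_, fun h hh => ?_⟩
  · change 0 ≤ ⟪∑ i, w i • distHessian (Q - Y i) h, h⟫
    rw [quadratic_form]
    exact Finset.sum_nonneg fun i _ =>
      mul_nonneg (hw i).le (inner_distHessian_self_nonneg _ _)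
  · change ⟪∑ i, w i • distHessian (Q - Y i) h, h⟫ = _
    simp only [quadratic_form, inner_distHessian_self_of_norm_eq_one hh, mul_div_assoc]

/-- The Hessian operator `A` of the weighted sum-of-distances objective is
positive semidefinite, and for a unit vector h its quadratic form equals the sum
of `wᵢ‖P_h(Q−Yᵢ)‖²/‖Q−Yᵢ‖³`, where `P_h(v) = v − ⟨v,h⟩h`. -/
theorem newton_hessian_posdef
    {H : Type*} [NormedAddCommGroup H] [InnerProductSpace ℝ H] [CompleteSpace H]
    {n : ℕ} (Y : Fin n → H) (w : Fin n → ℝ) (hw : ∀ i, 0 < w i) (Q : H)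
    (hline : ¬ ∃ a b : H, ∀ i, ∃ t : ℝ, Y i = a + t • b)
    (hne : ∀ i, Q ≠ Y i) :
    (∀ h : H,
        0 ≤ ⟪∑ i, w i • (‖Q - Y i‖⁻¹ • h -
              (⟪h, Q - Y i⟫ / ‖Q - Y i‖ ^ 3) • (Q - Y i)), h⟫) ∧
    (∀ h : H, ‖h‖ = 1 →
        ⟪∑ i, w i • (‖Q - Y i‖⁻¹ • h -
              (⟪h, Q - Y i⟫ / ‖Q - Y i‖ ^ 3) • (Q - Y i)), h⟫ =
          ∑ i, w i * ‖(Q - Y i) - ⟪Q - Y i, h⟫ • h‖ ^ 2 / ‖Q - Y i‖ ^ 3) :=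
  newton_hessian_posdef_general Y w hw Q
end
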